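/- arXiv:2311.03165 — 5 statements merged into one kernel-verified Lean document; each statement's English description precedes it below -/
import Mathlib

section
/- Under the bounds $N_m \leq N(x) \leq N_M$ and $L_m \leq L(x) \leq L_M$ with positive constants, the function $\chi_1(\eta) = \int_{\alpha_0}^{\eta} \frac{E_1(v)}{v^2 L(u(v))} dv$ satisfies $\chi_1(\eta) \leq \frac{a \exp(a^2 \frac{N_m}{L_M}\alpha_0^2)}{L_m}\sqrt{\frac{N_m}{L_M}} \, h(\eta)$, where $h(\eta) = \sqrt{\pi}\,\mathrm{erf}(a\sqrt{N_m/L_M}\,\alpha_0) - \sqrt{\pi}\,\mathrm{erf}(a\sqrt{N_m/L_M}\,\eta) + \frac{\sqrt{L_M}}{a\sqrt{N_m}\alpha_0}\exp(-a^2\frac{N_m}{L_M}\alpha_0^2) - \frac{\sqrt{L_M}}{a\sqrt{N_m}\eta}\exp(-a^2\frac{N_m}{L_M}\eta^2)$. -/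
open Real Set intervalIntegral

noncomputable def erf (x : ℝ) : ℝ :=
  (2 / Real.sqrt π) * ∫ t in (0:ℝ)..x, Real.exp (-t ^ 2)

/-! Since `N / L ≥ N_m / L_M`, the inner integral is at least `N_m (v² - α₀²) / (2 L_M)`, so
with `b = a √(N_m / L_M)` the integrand of `χ₁` is at most
`exp (b² α₀²) exp (-b² v²) / (L_m v²)`. The integral of `exp (-b² v²) / v²` is explicit:
`-exp (-b² v²) / v - b √π erf (b v)` is a primitive, and `b h(η)` is exactly the resulting
closed form. -/

theorem hasDerivAt_erf (x : ℝ) : HasDerivAt erf (2 / √π * exp (-x ^ 2)) x := by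
  have hc : Continuous fun t : ℝ => exp (-t ^ 2) := by fun_prop
  exact (hc.integral_hasStrictDerivAt 0 x).hasDerivAt.const_mul (2 / √π)

theorem integral_exp_neg_mul_sq_div_sq (b : ℝ) {α η : ℝ} (hα : 0 < α) (hη : 0 < η) :
    ∫ v in α..η, exp (-(b ^ 2) * v ^ 2) / v ^ 2 =
      b * √π * erf (b * α) - b * √π * erf (b * η)
        + exp (-(b ^ 2) * α ^ 2) / α - exp (-(b ^ 2) * η ^ 2) / η := by
  have hpos : ∀ x ∈ uIcc α η, 0 < x := fun x hx => (lt_min hα hη).trans_le hx.1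
  have hderiv : ∀ x ∈ uIcc α η, HasDerivAt
      (fun x => -exp (-(b ^ 2) * x ^ 2) / x - b * √π * erf (b * x))
      (exp (-(b ^ 2) * x ^ 2) / x ^ 2) x := by
    intro x hx
    have hexp : HasDerivAt (fun x => exp (-(b ^ 2) * x ^ 2))
        (exp (-(b ^ 2) * x ^ 2) * (-(b ^ 2) * (2 * x))) x := by
      simpa using ((hasDerivAt_pow 2 x).const_mul (-(b ^ 2))).exp
    have herf : HasDerivAt (fun x => erf (b * x)) (2 / √π * exp (-(b * x) ^ 2) * b) x :=
      (hasDerivAt_erf (b * x)).comp x (by simpa using (hasDerivAt_id x).const_mul b)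
    refine ((hexp.neg.div (hasDerivAt_id x) (hpos x hx).ne').sub
      (herf.const_mul (b * √π))).congr_deriv ?_
    rw [show -(b * x) ^ 2 = -(b ^ 2) * x ^ 2 by ring]
    have hx0 := (hpos x hx).ne'
    simp only [Pi.neg_apply, id]
    field_simp
    ring
  have hint :
      IntervalIntegrable (fun v => exp (-(b ^ 2) * v ^ 2) / v ^ 2) MeasureTheory.volume α η :=
    ContinuousOn.intervalIntegrable <| by
      refine ContinuousOn.div (by fun_prop) (by fun_prop) fun x hx => ?_
      exact (pow_pos (hpos x hx) 2).ne'
  rw [integral_eq_sub_of_hasDerivAt hderiv hint]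
  ring

theorem mul_sq_sub_sq_le_integral {f : ℝ → ℝ} {k α v : ℝ} (hαv : α ≤ v)
    (hf : IntervalIntegrable f MeasureTheory.volume α v) (hk : ∀ w ∈ Icc α v, k * w ≤ f w) :
    k * (v ^ 2 - α ^ 2) / 2 ≤ ∫ w in α..v, f w := by
  calc k * (v ^ 2 - α ^ 2) / 2 = ∫ w in α..v, k * w := by
        rw [integral_const_mul, integral_id]; ring
    _ ≤ ∫ w in α..v, f w :=
        integral_mono_on hαv ((continuous_const_mul k).intervalIntegrable _ _) hf hk

theorem integral_exp_neg_integral_div_le {f ℓ : ℝ → ℝ} {a k m α η : ℝ} (hα : 0 < α)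
    (hαη : α ≤ η) (hf : ContinuousOn f (Icc α η)) (hfk : ∀ w ∈ Icc α η, k * w ≤ f w)
    (hℓ : ContinuousOn ℓ (Icc α η)) (hm : 0 < m) (hℓm : ∀ w ∈ Icc α η, m ≤ ℓ w) :
    ∫ v in α..η, exp (-2 * a ^ 2 * ∫ w in α..v, f w) / (v ^ 2 * ℓ v) ≤
      exp (a ^ 2 * k * α ^ 2) / m * ∫ v in α..η, exp (-(a ^ 2 * k) * v ^ 2) / v ^ 2 := by
  have hpos : ∀ v ∈ Icc α η, 0 < v := fun v hv => hα.trans_le hv.1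
  have hprim : ContinuousOn (fun v => ∫ w in α..v, f w) (Icc α η) := by
    have := continuousOn_primitive_interval (μ := MeasureTheory.volume) (a := α) (b := η)
      (by simpa only [uIcc_of_le hαη] using hf.integrableOn_Icc)
    simpa only [uIcc_of_le hαη] using this
  have hexp_le : ∀ v ∈ Icc α η,
      exp (-2 * a ^ 2 * ∫ w in α..v, f w) ≤
        exp (a ^ 2 * k * α ^ 2) * exp (-(a ^ 2 * k) * v ^ 2) := by
    intro v hv
    have hsub : Icc α v ⊆ Icc α η := Icc_subset_Icc_right hv.2
    have hlow := mul_sq_sub_sq_le_integral hv.1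
      ((hf.mono hsub).intervalIntegrable_of_Icc hv.1) fun w hw => hfk w (hsub hw)
    rw [← exp_add, exp_le_exp]
    nlinarith [sq_nonneg a]
  rw [← integral_const_mul]
  refine integral_mono_on hαη ?_ ?_ fun v hv => ?_
  · refine (ContinuousOn.div (by fun_prop) (by fun_prop) fun v hv => ?_).intervalIntegrable_of_Icc
      hαη
    exact (mul_pos (pow_pos (hpos v hv) 2) (hm.trans_le (hℓm v hv))).ne'
  · refine (ContinuousOn.mul continuousOn_const (ContinuousOn.div (by fun_prop) (by fun_prop)
      fun v hv => (pow_pos (hpos v hv) 2).ne')).intervalIntegrable_of_Icc hαη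
  · have hv0 := hpos v hv
    calc exp (-2 * a ^ 2 * ∫ w in α..v, f w) / (v ^ 2 * ℓ v)
        ≤ exp (a ^ 2 * k * α ^ 2) * exp (-(a ^ 2 * k) * v ^ 2) / (v ^ 2 * m) :=
          div_le_div₀ (by positivity) (hexp_le v hv) (by positivity)
            (mul_le_mul_of_nonneg_left (hℓm v hv) (by positivity))
      _ = _ := by field_simp

theorem stmt3_general (a α₀ ξ Nm NM Lm LM : ℝ) (u N L : ℝ → ℝ)
    (ha : 0 < a) (hα : 0 < α₀)
    (hNm : 0 < Nm) (hLm : 0 < Lm) (hLM : Lm ≤ LM)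
    (hu : ContinuousOn u (Icc α₀ ξ)) (hN : Continuous N) (hL : Continuous L)
    (hNb : ∀ x, Nm ≤ N x ∧ N x ≤ NM) (hLb : ∀ x, Lm ≤ L x ∧ L x ≤ LM)
    (E₁ χ₁ h : ℝ → ℝ)
    (hE₁ : ∀ η, E₁ η = Real.exp (-2 * a ^ 2 * ∫ v in α₀..η, v * N (u v) / L (u v)))
    (hχ₁ : ∀ η, χ₁ η = ∫ v in α₀..η, E₁ v / (v ^ 2 * L (u v)))
    (hh : ∀ η, h η =
      Real.sqrt π * erf (a * Real.sqrt (Nm / LM) * α₀) -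
      Real.sqrt π * erf (a * Real.sqrt (Nm / LM) * η) +
      Real.sqrt LM / (a * Real.sqrt Nm * α₀) * Real.exp (-a ^ 2 * (Nm / LM) * α₀ ^ 2) -
      Real.sqrt LM / (a * Real.sqrt Nm * η) * Real.exp (-a ^ 2 * (Nm / LM) * η ^ 2)) :
    ∀ η ∈ Icc α₀ ξ,
      χ₁ η ≤ a * Real.exp (a ^ 2 * (Nm / LM) * α₀ ^ 2) / Lm *
        Real.sqrt (Nm / LM) * h η := by
  rintro η ⟨hαη, hηξ⟩
  have hLM0 : 0 < LM := hLm.trans_le hLM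
  have hk : 0 < Nm / LM := div_pos hNm hLM0
  have hu' : ContinuousOn u (Icc α₀ η) := hu.mono (Icc_subset_Icc_right hηξ)
  have hLu : ∀ w, 0 < L (u w) := fun w => hLm.trans_le (hLb (u w)).1
  have hNL : ∀ w ∈ Icc α₀ η, Nm / LM * w ≤ w * N (u w) / L (u w) := fun w hw => by
    rw [mul_div_assoc, mul_comm]
    exact mul_le_mul_of_nonneg_left
      (div_le_div₀ (hNm.trans_le (hNb _).1).le (hNb _).1 (hLu w) (hLb _).2) (hα.trans_le hw.1).le
  have hχ_le := integral_exp_neg_integral_div_le (f := fun v => v * N (u v) / L (u v))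
    (ℓ := fun v => L (u v)) (a := a) hα hαη
    ((continuousOn_id.mul (hN.comp_continuousOn hu')).div (hL.comp_continuousOn hu')
      fun w _ => (hLu w).ne') hNL (hL.comp_continuousOn hu') hLm fun w _ => (hLb _).1
  obtain ⟨b, hb⟩ : ∃ b, b = a * √(Nm / LM) := ⟨_, rfl⟩
  have hb0 : 0 < b := hb ▸ mul_pos ha (sqrt_pos.2 hk)
  have hb2 : b ^ 2 = a ^ 2 * (Nm / LM) := by rw [hb, mul_pow, sq_sqrt hk.le]
  have hbLM : a * √Nm = b * √LM := by
    rw [hb, mul_assoc, ← sqrt_mul hk.le, div_mul_cancel₀ _ hLM0.ne']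
  have hexp : ∀ x, -a ^ 2 * (Nm / LM) * x ^ 2 = -(b ^ 2) * x ^ 2 := fun x => by rw [hb2]; ring
  have hbh : b * h η = ∫ v in α₀..η, exp (-(b ^ 2) * v ^ 2) / v ^ 2 := by
    have hsLM : 0 < √LM := sqrt_pos.2 hLM0
    rw [integral_exp_neg_mul_sq_div_sq b hα (hα.trans_le hαη), hh, hbLM, hexp, hexp, ← hb]
    field_simp
  simp_rw [hχ₁, hE₁]
  calc _ ≤ exp (b ^ 2 * α₀ ^ 2) / Lm * ∫ v in α₀..η, exp (-(b ^ 2) * v ^ 2) / v ^ 2 := by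
        rwa [hb2]
    _ = _ := by rw [← hbh, hb2, hb]; ring

theorem stmt3 (a α₀ ξ Nm NM Lm LM : ℝ) (u N L : ℝ → ℝ)
    (ha : 0 < a) (hα : 0 < α₀) (hαξ : α₀ < ξ)
    (hNm : 0 < Nm) (hNM : Nm ≤ NM) (hLm : 0 < Lm) (hLM : Lm ≤ LM)
    (hu : ContinuousOn u (Icc α₀ ξ)) (hN : Continuous N) (hL : Continuous L)
    (hNb : ∀ x, Nm ≤ N x ∧ N x ≤ NM) (hLb : ∀ x, Lm ≤ L x ∧ L x ≤ LM)
    (E₁ χ₁ h : ℝ → ℝ)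
    (hE₁ : ∀ η, E₁ η = Real.exp (-2 * a ^ 2 * ∫ v in α₀..η, v * N (u v) / L (u v)))
    (hχ₁ : ∀ η, χ₁ η = ∫ v in α₀..η, E₁ v / (v ^ 2 * L (u v)))
    (hh : ∀ η, h η =
      Real.sqrt π * erf (a * Real.sqrt (Nm / LM) * α₀) -
      Real.sqrt π * erf (a * Real.sqrt (Nm / LM) * η) +
      Real.sqrt LM / (a * Real.sqrt Nm * α₀) * Real.exp (-a ^ 2 * (Nm / LM) * α₀ ^ 2) -
      Real.sqrt LM / (a * Real.sqrt Nm * η) * Real.exp (-a ^ 2 * (Nm / LM) * η ^ 2)) :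
    ∀ η ∈ Icc α₀ ξ,
      χ₁ η ≤ a * Real.exp (a ^ 2 * (Nm / LM) * α₀ ^ 2) / Lm *
        Real.sqrt (Nm / LM) * h η :=
  stmt3_general a α₀ ξ Nm NM Lm LM u N L ha hα hNm hLm hLM hu hN hL hNb hLb E₁ χ₁ h hE₁ hχ₁ hh
end

section
/- Suppose $u_2$ is continuous on $[\xi, \infty)$, $N, L$ satisfy the positive bounds $N_m \leq N \leq N_M$, $L_m \leq L \leq L_M$, and $K(u_2(s)) \leq K_M e^{-Rs^2}$ with $R \geq a^2 N_M / L_m$. Then the function $\Phi_2(\eta) = \frac{k^2}{16a^2\pi^2}\int_{\xi}^{\eta} \frac{E_2(v)}{v^2 L(u_2(v))} \int_{\xi}^{v} \frac{K(u_2(s))}{s^2 E_2(s)} ds\, dv$ satisfies $\Phi_2(\eta) \leq \frac{k^2 K_M}{16 a^2 \pi^2 L_m \xi^2}$ for all $\eta \geq \xi$, where $E_2(\eta) = \exp(-2a^2\int_{\xi}^{\eta} v\, N(u_2(v))/L(u_2(v))\, dv)$. -/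
open Real Set intervalIntegral

/-! Since the integrand of its exponent is nonnegative, `E₂` is positive and nonincreasing on
`[ξ, ∞)`, so `E₂ v / E₂ s ≤ 1` for `ξ ≤ s ≤ v`; and `R ≥ 0` gives `K ∘ u₂ ≤ K_M`. Hence
`E₂ v ∫_ξ^v K/(s² E₂ s) ds ≤ K_M ∫_ξ^v s⁻² ds ≤ K_M / ξ`, and the outer integral is at most
`K_M / (ξ L_m) ∫_ξ^η v⁻² dv ≤ K_M / (L_m ξ²)`. -/

theorem integral_div_sq_of_pos {c ξ v : ℝ} (hξ : 0 < ξ) (hv : ξ ≤ v) :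
    ∫ s in ξ..v, c / s ^ 2 = c / ξ - c / v := by
  have hpos : ∀ s ∈ uIcc ξ v, s ≠ 0 := fun s hs =>
    (hξ.trans_le (uIcc_of_le hv ▸ hs).1).ne'
  have hderiv : ∀ s ∈ uIcc ξ v, HasDerivAt (fun s => -c * s⁻¹) (c / s ^ 2) s := fun s hs => by
    simpa [div_eq_mul_inv] using (hasDerivAt_inv (hpos s hs)).const_mul (-c)
  have hint : IntervalIntegrable (fun s => c / s ^ 2) MeasureTheory.volume ξ v :=
    (continuousOn_const.div (continuousOn_pow 2) fun s hs =>
      pow_ne_zero 2 (hpos s hs)).intervalIntegrable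
  rw [integral_eq_sub_of_hasDerivAt hderiv hint]
  ring

theorem integral_le_div_of_le_div_sq {f : ℝ → ℝ} {c ξ v : ℝ} (hc : 0 ≤ c) (hξ : 0 < ξ)
    (hv : ξ ≤ v) (hf : ∀ s ∈ Icc ξ v, f s ≤ c / s ^ 2) : ∫ s in ξ..v, f s ≤ c / ξ := by
  by_cases hfi : IntervalIntegrable f MeasureTheory.volume ξ v
  · have hint : IntervalIntegrable (fun s => c / s ^ 2) MeasureTheory.volume ξ v := by
      refine (continuousOn_const.div (continuousOn_pow 2) fun s hs => ?_).intervalIntegrable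
      exact pow_ne_zero 2 (hξ.trans_le (uIcc_of_le hv ▸ hs).1).ne'
    calc ∫ s in ξ..v, f s ≤ ∫ s in ξ..v, c / s ^ 2 := integral_mono_on hv hfi hint hf
      _ = c / ξ - c / v := integral_div_sq_of_pos hξ hv
      _ ≤ c / ξ := sub_le_self _ (div_nonneg hc (hξ.trans_le hv).le)
  · rw [integral_undef hfi]
    exact div_nonneg hc hξ.le

theorem antitoneOn_exp_mul_integral {f : ℝ → ℝ} {c ξ : ℝ} (hc : c ≤ 0)
    (hf : ContinuousOn f (Ici ξ)) (hf0 : ∀ t ∈ Ici ξ, 0 ≤ f t) :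
    AntitoneOn (fun η => exp (c * ∫ t in ξ..η, f t)) (Ici ξ) := by
  intro s hs v hv hsv
  refine exp_le_exp.2 (mul_le_mul_of_nonpos_left ?_ hc)
  refine integral_mono_interval le_rfl hs hsv ?_ ?_
  · exact MeasureTheory.ae_restrict_of_forall_mem measurableSet_Ioc fun t ht => hf0 t ht.1.le
  · exact (hf.mono fun t ht => (uIcc_of_le (hs.trans hsv) ▸ ht).1).intervalIntegrable

theorem mul_integral_div_sq_mul_le {E κ : ℝ → ℝ} {M ξ v : ℝ} (hM : 0 ≤ M) (hξ : 0 < ξ)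
    (hv : ξ ≤ v) (hE : AntitoneOn E (Icc ξ v)) (hE0 : ∀ s ∈ Icc ξ v, 0 < E s)
    (hκ : ∀ s ∈ Icc ξ v, κ s ≤ M) :
    E v * ∫ s in ξ..v, κ s / (s ^ 2 * E s) ≤ M / ξ := by
  rw [← integral_const_mul]
  refine integral_le_div_of_le_div_sq hM hξ hv fun s hs => ?_
  have hs0 : 0 < s := hξ.trans_le hs.1
  have hvs : E v * κ s ≤ M * E s :=
    calc E v * κ s ≤ E v * M := mul_le_mul_of_nonneg_left (hκ s hs) (hE0 v ⟨hv, le_rfl⟩).le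
      _ ≤ E s * M := mul_le_mul_of_nonneg_right (hE hs ⟨hv, le_rfl⟩ hs.2) hM
      _ = M * E s := mul_comm _ _
  calc E v * (κ s / (s ^ 2 * E s)) = E v * κ s / (s ^ 2 * E s) := mul_div_assoc' _ _ _
    _ ≤ M * E s / (s ^ 2 * E s) := by gcongr; exact mul_pos (pow_pos hs0 2) (hE0 s hs) |>.le
    _ = M / s ^ 2 := mul_div_mul_right _ _ (hE0 s hs).ne'

theorem integral_div_sq_mul_integral_div_sq_mul_le {E ℓ κ : ℝ → ℝ} {M m ξ η : ℝ} (hM : 0 ≤ M)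
    (hm : 0 < m) (hξ : 0 < ξ) (hη : ξ ≤ η) (hE : AntitoneOn E (Icc ξ η))
    (hE0 : ∀ s ∈ Icc ξ η, 0 < E s) (hℓ : ∀ v ∈ Icc ξ η, m ≤ ℓ v) (hκ : ∀ s ∈ Icc ξ η, κ s ≤ M) :
    ∫ v in ξ..η, E v / (v ^ 2 * ℓ v) * ∫ s in ξ..v, κ s / (s ^ 2 * E s) ≤ M / (m * ξ ^ 2) := by
  have hsub : ∀ {v}, v ∈ Icc ξ η → Icc ξ v ⊆ Icc ξ η := fun hv => Icc_subset_Icc_right hv.2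
  have hinner : ∀ v ∈ Icc ξ η, E v * ∫ s in ξ..v, κ s / (s ^ 2 * E s) ≤ M / ξ := fun v hv =>
    mul_integral_div_sq_mul_le hM hξ hv.1 (hE.mono (hsub hv)) (fun s hs => hE0 s (hsub hv hs))
      fun s hs => hκ s (hsub hv hs)
  calc ∫ v in ξ..η, E v / (v ^ 2 * ℓ v) * ∫ s in ξ..v, κ s / (s ^ 2 * E s)
      ≤ M / (ξ * m) / ξ := by
        refine integral_le_div_of_le_div_sq (by positivity) hξ hη fun v hv => ?_
        have hv0 : 0 < v := hξ.trans_le hv.1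
        calc E v / (v ^ 2 * ℓ v) * ∫ s in ξ..v, κ s / (s ^ 2 * E s)
            = (E v * ∫ s in ξ..v, κ s / (s ^ 2 * E s)) / (v ^ 2 * ℓ v) :=
              div_mul_eq_mul_div _ _ _
          _ ≤ M / ξ / (v ^ 2 * m) := by gcongr <;> first | exact hinner v hv | exact hℓ v hv
          _ = M / (ξ * m) / v ^ 2 := by ring
    _ = M / (m * ξ ^ 2) := by ring

theorem stmt5_general (a k ξ Nm NM Lm LM KM R : ℝ) (u₂ N L K : ℝ → ℝ)
    (hξ : 0 < ξ)
    (hNm : 0 < Nm) (hNM : Nm ≤ NM) (hLm : 0 < Lm) (hKM : 0 < KM)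
    (hR : a ^ 2 * NM / Lm ≤ R)
    (hu : ContinuousOn u₂ (Ici ξ))
    (hN : Continuous N) (hL : Continuous L)
    (hNb : ∀ x, Nm ≤ N x ∧ N x ≤ NM) (hLb : ∀ x, Lm ≤ L x ∧ L x ≤ LM)
    (hKb : ∀ s, s ∈ Ici ξ → 0 ≤ K (u₂ s) ∧ K (u₂ s) ≤ KM * Real.exp (-R * s ^ 2))
    (E₂ Φ₂ : ℝ → ℝ)
    (hE₂ : ∀ η, E₂ η = Real.exp (-2 * a ^ 2 * ∫ v in ξ..η, v * N (u₂ v) / L (u₂ v)))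
    (hΦ₂ : ∀ η, Φ₂ η = k ^ 2 / (16 * a ^ 2 * π ^ 2) *
      ∫ v in ξ..η, E₂ v / (v ^ 2 * L (u₂ v)) * ∫ s in ξ..v, K (u₂ s) / (s ^ 2 * E₂ s)) :
    ∀ η, ξ ≤ η → Φ₂ η ≤ k ^ 2 * KM / (16 * a ^ 2 * π ^ 2 * Lm * ξ ^ 2) := by
  intro η hη
  have hLpos : ∀ x, 0 < L x := fun x => hLm.trans_le (hLb x).1
  have hE : AntitoneOn E₂ (Ici ξ) := by
    rw [show E₂ = _ from funext hE₂]
    refine antitoneOn_exp_mul_integral (by nlinarith [sq_nonneg a]) ?_ fun t ht => ?_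
    · exact (continuousOn_id.mul (hN.comp_continuousOn hu)).div (hL.comp_continuousOn hu)
        fun x _ => (hLpos _).ne'
    · exact div_nonneg (mul_nonneg (hξ.trans_le ht).le (hNm.trans_le (hNb _).1).le) (hLpos _).le
  have hK : ∀ s ∈ Ici ξ, K (u₂ s) ≤ KM := fun s hs => by
    have hR0 : 0 ≤ R := (div_nonneg (mul_nonneg (sq_nonneg a) (hNm.le.trans hNM)) hLm.le).trans hR
    refine (hKb s hs).2.trans (mul_le_of_le_one_right hKM.le (exp_le_one_iff.2 ?_))
    nlinarith [sq_nonneg s]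
  have hΦ := integral_div_sq_mul_integral_div_sq_mul_le hKM.le hLm hξ hη
    (hE.mono Icc_subset_Ici_self) (fun s _ => hE₂ s ▸ exp_pos _) (fun v _ => (hLb (u₂ v)).1)
    fun s hs => hK s hs.1
  calc Φ₂ η ≤ k ^ 2 / (16 * a ^ 2 * π ^ 2) * (KM / (Lm * ξ ^ 2)) := hΦ₂ η ▸ by gcongr
    _ = k ^ 2 * KM / (16 * a ^ 2 * π ^ 2 * Lm * ξ ^ 2) := by ring

theorem stmt5 (a k ξ Nm NM Lm LM Km KM R : ℝ) (u₂ N L K : ℝ → ℝ)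
    (ha : 0 < a) (hk : 0 < k) (hξ : 0 < ξ)
    (hNm : 0 < Nm) (hNM : Nm ≤ NM) (hLm : 0 < Lm) (hLM : Lm ≤ LM) (hKM : 0 < KM)
    (hR : a ^ 2 * NM / Lm ≤ R)
    (hu : ContinuousOn u₂ (Ici ξ))
    (hN : Continuous N) (hL : Continuous L) (hKc : Continuous K)
    (hNb : ∀ x, Nm ≤ N x ∧ N x ≤ NM) (hLb : ∀ x, Lm ≤ L x ∧ L x ≤ LM)
    (hKb : ∀ s, s ∈ Ici ξ → 0 ≤ K (u₂ s) ∧ K (u₂ s) ≤ KM * Real.exp (-R * s ^ 2))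
    (E₂ Φ₂ : ℝ → ℝ)
    (hE₂ : ∀ η, E₂ η = Real.exp (-2 * a ^ 2 * ∫ v in ξ..η, v * N (u₂ v) / L (u₂ v)))
    (hΦ₂ : ∀ η, Φ₂ η = k ^ 2 / (16 * a ^ 2 * π ^ 2) *
      ∫ v in ξ..η, E₂ v / (v ^ 2 * L (u₂ v)) * ∫ s in ξ..v, K (u₂ s) / (s ^ 2 * E₂ s)) :
    ∀ η, ξ ≤ η → Φ₂ η ≤ k ^ 2 * KM / (16 * a ^ 2 * π ^ 2 * Lm * ξ ^ 2) :=
  stmt5_general a k ξ Nm NM Lm LM KM R u₂ N L K hξ hNm hNM hLm hKM hR hu hN hL hNb hLb hKb E₂ Φ₂ hE₂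
    hΦ₂
end

section
/- Under the Lipschitz and boundedness assumptions on $N$ and $L$, for continuous $u, u^*$ on $[\alpha_0, \xi]$ and $\eta \in [\alpha_0, \xi]$: $|\chi_1(\eta; u) - \chi_1(\eta; u^*)| \leq \left[\frac{a^2}{L_m}\left(\frac{\widetilde{N}}{L_m} + \frac{N_M\widetilde{L}}{L_m^2}\right)\left(\eta + \frac{\alpha_0^2}{\eta} - 2\alpha_0\right) + \frac{\widetilde{L}}{L_m^2}\left(\frac{1}{\alpha_0} - \frac{1}{\eta}\right)\right]\|u - u^*\|_\infty$, where $\chi_1(\eta; u) = \int_{\alpha_0}^{\eta} \frac{E_1(v; u)}{v^2 L(u(v))} dv$ and $E_1(\eta; u) = \exp(-2a^2\int_{\alpha_0}^{\eta} v\,N(u(v))/L(u(v))\,dv)$. -/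
/-!
Subtract the two integrands of `χ₁` and bound the difference pointwise. Writing
`E/(v²L) - E*/(v²L*) = (E - E*)/(v²L) + E*(L* - L)/(v²LL*)` and using `E* ≤ 1`, the difference
is at most `|E₁ - E₁*|/(v²L_m) + L̃‖u - u*‖/(v²L_m²)`. Since `exp` is 1-Lipschitz on `(-∞, 0]` and
`N/L` is Lipschitz with constant `C = Ñ/L_m + N_M L̃/L_m²`, `|E₁ - E₁*| ≤ a²C(v² - α₀²)‖u - u*‖`.
Integrating `1 - α₀²/v²` and `1/v²` over `[α₀, η]` gives the two brackets of the bound.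
-/

open Real Set intervalIntegral MeasureTheory

lemma abs_exp_sub_exp_le_of_nonpos {x y : ℝ} (hx : x ≤ 0) (hy : y ≤ 0) :
    |exp x - exp y| ≤ |x - y| := by
  wlog hxy : x ≤ y generalizing x y
  · rw [abs_sub_comm, abs_sub_comm x]
    exact this hy hx (le_of_not_ge hxy)
  have hexp : exp x = exp y * exp (x - y) := by rw [← exp_add]; ring_nf
  have hy1 : exp y ≤ 1 := exp_le_one_iff.2 hy
  have hxy1 : exp (x - y) ≤ 1 := exp_le_one_iff.2 (by linarith)
  rw [abs_sub_comm, abs_of_nonneg (sub_nonneg.2 (exp_le_exp.2 hxy)), abs_sub_comm,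
    abs_of_nonneg (sub_nonneg.2 hxy)]
  nlinarith [add_one_le_exp (x - y), mul_nonneg (sub_nonneg.2 hy1) (sub_nonneg.2 hxy1)]

lemma abs_div_sub_div_le {A B P Q c B₀ : ℝ} (hc : 0 < c) (hP : c ≤ P) (hQ : c ≤ Q)
    (hB : 0 ≤ B) (hB₀ : B ≤ B₀) :
    |A / P - B / Q| ≤ |A - B| / c + B₀ * |P - Q| / c ^ 2 := by
  have hP0 : 0 < P := hc.trans_le hP
  have hQ0 : 0 < Q := hc.trans_le hQ
  have hB₀0 : 0 ≤ B₀ := hB.trans hB₀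
  calc |A / P - B / Q| ≤ |A / P - B / P| + |B / P - B / Q| := abs_sub_le _ _ _
    _ = |A - B| / P + B * |P - Q| / (P * Q) := by
        rw [div_sub_div_same, abs_div, abs_of_pos hP0, div_sub_div _ _ hP0.ne' hQ0.ne', abs_div,
          abs_of_pos (mul_pos hP0 hQ0), show B * Q - P * B = B * (Q - P) by ring, abs_mul,
          abs_of_nonneg hB, abs_sub_comm Q]
    _ ≤ |A - B| / c + B₀ * |P - Q| / (c * c) := by gcongr
    _ = |A - B| / c + B₀ * |P - Q| / c ^ 2 := by rw [sq]

lemma nonneg_of_abs_sub_le_mul_abs {f : ℝ → ℝ} {K : ℝ}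
    (h : ∀ x y, |f x - f y| ≤ K * |x - y|) : 0 ≤ K := by
  simpa using (abs_nonneg _).trans (h 1 0)

lemma continuous_of_abs_sub_le_mul_abs {f : ℝ → ℝ} {K : ℝ}
    (h : ∀ x y, |f x - f y| ≤ K * |x - y|) : Continuous f :=
  (LipschitzWith.of_dist_le' fun x y => by simpa only [Real.dist_eq] using h x y).continuous

lemma abs_div_sub_div_le_of_lipschitz {N L : ℝ → ℝ} {NM Lm Nt Lt : ℝ} (hLm : 0 < Lm)
    (hL : ∀ x, Lm ≤ L x) (hN : ∀ x, 0 ≤ N x ∧ N x ≤ NM)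
    (hNlip : ∀ x y, |N x - N y| ≤ Nt * |x - y|) (hLlip : ∀ x y, |L x - L y| ≤ Lt * |x - y|)
    (x y : ℝ) : |N x / L x - N y / L y| ≤ (Nt / Lm + NM * Lt / Lm ^ 2) * |x - y| := by
  have hNM : 0 ≤ NM := (hN 0).1.trans (hN 0).2
  calc |N x / L x - N y / L y| ≤ |N x - N y| / Lm + NM * |L x - L y| / Lm ^ 2 :=
        abs_div_sub_div_le hLm (hL x) (hL y) (hN y).1 (hN y).2
    _ ≤ Nt * |x - y| / Lm + NM * (Lt * |x - y|) / Lm ^ 2 := by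
        gcongr
        exacts [hNlip x y, hLlip x y]
    _ = (Nt / Lm + NM * Lt / Lm ^ 2) * |x - y| := by ring

lemma abs_integral_sub_integral_le {f g h : ℝ → ℝ} {a b : ℝ} (hab : a ≤ b)
    (hf : IntervalIntegrable f volume a b) (hg : IntervalIntegrable g volume a b)
    (hh : IntervalIntegrable h volume a b) (hfg : ∀ t ∈ Icc a b, |f t - g t| ≤ h t) :
    |(∫ t in a..b, f t) - ∫ t in a..b, g t| ≤ ∫ t in a..b, h t := by
  rw [← integral_sub hf hg, ← Real.norm_eq_abs]
  exact norm_integral_le_of_norm_le hab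
    (ae_of_all _ fun t ht => hfg t (Ioc_subset_Icc_self ht)) hh

lemma le_iSup_Icc_of_continuousOn {g : ℝ → ℝ} {a b v : ℝ} (hg : ContinuousOn g (Icc a b))
    (hv : v ∈ Icc a b) : g v ≤ ⨆ x : Icc a b, g x :=
  le_ciSup (f := fun x : Icc a b => g x)
    (by simpa only [image_eq_range] using isCompact_Icc.bddAbove_image hg) ⟨v, hv⟩

lemma intervalIntegrable_sub_sq_div_sq_add_div_sq {α₀ η : ℝ} (hα : 0 < α₀) (hη : α₀ ≤ η)
    (K D : ℝ) :
    IntervalIntegrable (fun v => K * (v ^ 2 - α₀ ^ 2) / v ^ 2 + D / v ^ 2) volume α₀ η :=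
  ContinuousOn.intervalIntegrable_of_Icc hη fun v hv =>
    (by fun_prop (disch := exact pow_ne_zero 2 (hα.trans_le hv.1).ne') :
      ContinuousAt (fun v => K * (v ^ 2 - α₀ ^ 2) / v ^ 2 + D / v ^ 2) v).continuousWithinAt

lemma integral_sub_sq_div_sq_add_div_sq {α₀ η : ℝ} (hα : 0 < α₀) (hη : α₀ ≤ η) (K D : ℝ) :
    ∫ v in α₀..η, (K * (v ^ 2 - α₀ ^ 2) / v ^ 2 + D / v ^ 2) =
      K * (η + α₀ ^ 2 / η - 2 * α₀) + D * (1 / α₀ - 1 / η) := by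
  have hderiv : ∀ v ∈ uIcc α₀ η, HasDerivAt (fun v => K * (v + α₀ ^ 2 / v) - D / v)
      (K * (v ^ 2 - α₀ ^ 2) / v ^ 2 + D / v ^ 2) v := by
    intro v hv
    have hv0 : v ≠ 0 := (hα.trans_le (uIcc_of_le hη ▸ hv).1).ne'
    have h := (((hasDerivAt_id' v).fun_add ((hasDerivAt_inv hv0).const_mul (α₀ ^ 2))).const_mul
      K).fun_sub ((hasDerivAt_inv hv0).const_mul D)
    simp only [← div_eq_mul_inv] at h
    refine h.congr_deriv ?_
    field_simp
    ring
  rw [integral_eq_sub_of_hasDerivAt hderiv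
    (intervalIntegrable_sub_sq_div_sq_add_div_sq hα hη K D)]
  field_simp
  ring

noncomputable def decayFactor (a α₀ : ℝ) (N L w : ℝ → ℝ) (η : ℝ) : ℝ :=
  exp (-2 * a ^ 2 * ∫ v in α₀..η, v * N (w v) / L (w v))

section DecayFactor

variable {a α₀ η C M Lm Lt : ℝ} {N L u u' w : ℝ → ℝ}

lemma integral_mul_div_nonneg (hα : 0 ≤ α₀) (hη : α₀ ≤ η) (hN : ∀ x, 0 ≤ N x)
    (hL : ∀ x, 0 < L x) : 0 ≤ ∫ v in α₀..η, v * N (w v) / L (w v) :=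
  integral_nonneg hη fun _ hv => div_nonneg (mul_nonneg (hα.trans hv.1) (hN _)) (hL _).le

lemma decayFactor_le_one (hα : 0 ≤ α₀) (hη : α₀ ≤ η) (hN : ∀ x, 0 ≤ N x)
    (hL : ∀ x, 0 < L x) : decayFactor a α₀ N L w η ≤ 1 :=
  exp_le_one_iff.2 <| mul_nonpos_of_nonpos_of_nonneg (by nlinarith [sq_nonneg a])
    (integral_mul_div_nonneg hα hη hN hL)

lemma continuousOn_mul_div {s : Set ℝ} (hN : Continuous N) (hL : Continuous L)
    (hL0 : ∀ x, 0 < L x) (hw : ContinuousOn w s) :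
    ContinuousOn (fun v => v * N (w v) / L (w v)) s :=
  (continuousOn_id.mul (hN.comp_continuousOn hw)).div (hL.comp_continuousOn hw)
    fun _ _ => (hL0 _).ne'

lemma continuousOn_decayFactor (hη : α₀ ≤ η) (hN : Continuous N) (hL : Continuous L)
    (hL0 : ∀ x, 0 < L x) (hw : ContinuousOn w (Icc α₀ η)) :
    ContinuousOn (decayFactor a α₀ N L w) (Icc α₀ η) := by
  rw [← uIcc_of_le hη] at hw ⊢
  exact continuous_exp.comp_continuousOn <| continuousOn_const.mul <|
    continuousOn_primitive_interval (continuousOn_mul_div hN hL hL0 hw).integrableOn_uIcc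

lemma abs_decayFactor_sub_le (hα : 0 ≤ α₀) (hη : α₀ ≤ η) (hN : Continuous N)
    (hN0 : ∀ x, 0 ≤ N x) (hL : Continuous L) (hL0 : ∀ x, 0 < L x)
    (hratio : ∀ x y, |N x / L x - N y / L y| ≤ C * |x - y|)
    (hu : ContinuousOn u (Icc α₀ η)) (hu' : ContinuousOn u' (Icc α₀ η))
    (hM : ∀ v ∈ Icc α₀ η, |u v - u' v| ≤ M) :
    |decayFactor a α₀ N L u η - decayFactor a α₀ N L u' η| ≤
      a ^ 2 * C * M * (η ^ 2 - α₀ ^ 2) := by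
  have hC : 0 ≤ C := nonneg_of_abs_sub_le_mul_abs hratio
  set I := fun w : ℝ → ℝ => ∫ v in α₀..η, v * N (w v) / L (w v)
  have hI : |I u - I u'| ≤ ∫ v in α₀..η, v * (C * M) := by
    refine abs_integral_sub_integral_le hη
      ((continuousOn_mul_div hN hL hL0 hu).intervalIntegrable_of_Icc hη)
      ((continuousOn_mul_div hN hL hL0 hu').intervalIntegrable_of_Icc hη)
      ((continuous_mul_const (C * M)).intervalIntegrable _ _) fun v hv => ?_
    have hv0 : 0 ≤ v := hα.trans hv.1
    rw [mul_div_assoc, mul_div_assoc, ← mul_sub, abs_mul, abs_of_nonneg hv0]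
    exact mul_le_mul_of_nonneg_left ((hratio _ _).trans (by gcongr; exact hM v hv)) hv0
  have hexp_arg : ∀ w, -2 * a ^ 2 * I w ≤ 0 := fun w =>
    mul_nonpos_of_nonpos_of_nonneg (by nlinarith [sq_nonneg a])
      (integral_mul_div_nonneg hα hη hN0 hL0)
  calc |decayFactor a α₀ N L u η - decayFactor a α₀ N L u' η|
      ≤ |-2 * a ^ 2 * I u - -2 * a ^ 2 * I u'| :=
        abs_exp_sub_exp_le_of_nonpos (hexp_arg u) (hexp_arg u')
    _ = 2 * a ^ 2 * |I u - I u'| := by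
        rw [← mul_sub, abs_mul, abs_mul, abs_neg, abs_two, abs_of_nonneg (sq_nonneg a)]
    _ ≤ 2 * a ^ 2 * ∫ v in α₀..η, v * (C * M) := by gcongr
    _ = a ^ 2 * C * M * (η ^ 2 - α₀ ^ 2) := by
        rw [intervalIntegral.integral_mul_const, integral_id]
        ring

lemma abs_decayFactor_div_sub_le (hα : 0 < α₀) (hη : α₀ ≤ η) (hLm : 0 < Lm)
    (hN : Continuous N) (hN0 : ∀ x, 0 ≤ N x) (hL : Continuous L) (hLm_le : ∀ x, Lm ≤ L x)
    (hratio : ∀ x y, |N x / L x - N y / L y| ≤ C * |x - y|)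
    (hLlip : ∀ x y, |L x - L y| ≤ Lt * |x - y|)
    (hu : ContinuousOn u (Icc α₀ η)) (hu' : ContinuousOn u' (Icc α₀ η))
    (hM : ∀ v ∈ Icc α₀ η, |u v - u' v| ≤ M) :
    |decayFactor a α₀ N L u η / (η ^ 2 * L (u η)) -
        decayFactor a α₀ N L u' η / (η ^ 2 * L (u' η))| ≤
      a ^ 2 / Lm * C * M * (η ^ 2 - α₀ ^ 2) / η ^ 2 + Lt / Lm ^ 2 * M / η ^ 2 := by
  have hL0 : ∀ x, 0 < L x := fun x => hLm.trans_le (hLm_le x)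
  have hη0 : 0 < η ^ 2 := pow_pos (hα.trans_le hη) 2
  have hηmem : η ∈ Icc α₀ η := right_mem_Icc.2 hη
  have hE := abs_decayFactor_sub_le (a := a) hα.le hη hN hN0 hL hL0 hratio hu hu' hM
  have hLL : |L (u η) - L (u' η)| ≤ Lt * M :=
    (hLlip _ _).trans (mul_le_mul_of_nonneg_left (hM η hηmem)
      (nonneg_of_abs_sub_le_mul_abs hLlip))
  calc _ ≤ |decayFactor a α₀ N L u η - decayFactor a α₀ N L u' η| / (η ^ 2 * Lm) +
        1 * |η ^ 2 * L (u η) - η ^ 2 * L (u' η)| / (η ^ 2 * Lm) ^ 2 :=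
        abs_div_sub_div_le (by positivity) (by gcongr; exact hLm_le _)
          (by gcongr; exact hLm_le _) (exp_pos _).le (decayFactor_le_one hα.le hη hN0 hL0)
    _ = |decayFactor a α₀ N L u η - decayFactor a α₀ N L u' η| / (η ^ 2 * Lm) +
        |L (u η) - L (u' η)| / (η ^ 2 * Lm ^ 2) := by
        rw [← mul_sub, abs_mul, abs_of_pos hη0]
        field_simp
    _ ≤ a ^ 2 * C * M * (η ^ 2 - α₀ ^ 2) / (η ^ 2 * Lm) + Lt * M / (η ^ 2 * Lm ^ 2) := by
        gcongr
    _ = a ^ 2 / Lm * C * M * (η ^ 2 - α₀ ^ 2) / η ^ 2 + Lt / Lm ^ 2 * M / η ^ 2 := by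
        field_simp

lemma abs_integral_decayFactor_div_sub_le (hα : 0 < α₀) (hη : α₀ ≤ η) (hLm : 0 < Lm)
    (hN : Continuous N) (hN0 : ∀ x, 0 ≤ N x) (hL : Continuous L) (hLm_le : ∀ x, Lm ≤ L x)
    (hratio : ∀ x y, |N x / L x - N y / L y| ≤ C * |x - y|)
    (hLlip : ∀ x y, |L x - L y| ≤ Lt * |x - y|)
    (hu : ContinuousOn u (Icc α₀ η)) (hu' : ContinuousOn u' (Icc α₀ η))
    (hM : ∀ v ∈ Icc α₀ η, |u v - u' v| ≤ M) :
    |(∫ v in α₀..η, decayFactor a α₀ N L u v / (v ^ 2 * L (u v))) -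
        ∫ v in α₀..η, decayFactor a α₀ N L u' v / (v ^ 2 * L (u' v))| ≤
      (a ^ 2 / Lm * C * (η + α₀ ^ 2 / η - 2 * α₀) + Lt / Lm ^ 2 * (1 / α₀ - 1 / η)) * M := by
  have hL0 : ∀ x, 0 < L x := fun x => hLm.trans_le (hLm_le x)
  have hint : ∀ w, ContinuousOn w (Icc α₀ η) → IntervalIntegrable
      (fun v => decayFactor a α₀ N L w v / (v ^ 2 * L (w v))) volume α₀ η := fun w hw =>
    ((continuousOn_decayFactor hη hN hL hL0 hw).div
      ((continuousOn_id.pow 2).mul (hL.comp_continuousOn hw))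
      fun v hv => (mul_pos (pow_pos (hα.trans_le hv.1) 2) (hL0 _)).ne').intervalIntegrable_of_Icc hη
  have hpoint : ∀ v ∈ Icc α₀ η,
      |decayFactor a α₀ N L u v / (v ^ 2 * L (u v)) -
        decayFactor a α₀ N L u' v / (v ^ 2 * L (u' v))| ≤
      a ^ 2 / Lm * C * M * (v ^ 2 - α₀ ^ 2) / v ^ 2 + Lt / Lm ^ 2 * M / v ^ 2 := fun v hv =>
    have hsub : Icc α₀ v ⊆ Icc α₀ η := Icc_subset_Icc_right hv.2
    abs_decayFactor_div_sub_le hα hv.1 hLm hN hN0 hL hLm_le hratio hLlip (hu.mono hsub)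
      (hu'.mono hsub) fun t ht => hM t (hsub ht)
  calc _ ≤ ∫ v in α₀..η,
        (a ^ 2 / Lm * C * M * (v ^ 2 - α₀ ^ 2) / v ^ 2 + Lt / Lm ^ 2 * M / v ^ 2) :=
        abs_integral_sub_integral_le hη (hint u hu) (hint u' hu')
          (intervalIntegrable_sub_sq_div_sq_add_div_sq hα hη _ _) hpoint
    _ = _ := by
        rw [integral_sub_sq_div_sq_add_div_sq hα hη]
        ring

end DecayFactor

theorem stmt8_general (a α₀ ξ Nm NM Lm LM Nt Lt : ℝ) (u ustar N L : ℝ → ℝ)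
    (hα : 0 < α₀)
    (hNm : 0 < Nm) (hLm : 0 < Lm)
    (hNb : ∀ x, Nm ≤ N x ∧ N x ≤ NM) (hLb : ∀ x, Lm ≤ L x ∧ L x ≤ LM)
    (hNlip : ∀ x y, |N x - N y| ≤ Nt * |x - y|)
    (hLlip : ∀ x y, |L x - L y| ≤ Lt * |x - y|)
    (hu : ContinuousOn u (Icc α₀ ξ)) (hustar : ContinuousOn ustar (Icc α₀ ξ))
    (E₁ χ₁ : (ℝ → ℝ) → ℝ → ℝ)
    (hE₁ : ∀ w η, E₁ w η = Real.exp (-2 * a ^ 2 * ∫ v in α₀..η, v * N (w v) / L (w v)))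
    (hχ₁ : ∀ w η, χ₁ w η = ∫ v in α₀..η, E₁ w v / (v ^ 2 * L (w v))) :
    ∀ η ∈ Icc α₀ ξ,
      |χ₁ u η - χ₁ ustar η| ≤
        (a ^ 2 / Lm * (Nt / Lm + NM * Lt / Lm ^ 2) * (η + α₀ ^ 2 / η - 2 * α₀) +
          Lt / Lm ^ 2 * (1 / α₀ - 1 / η)) *
          ⨆ v : Icc α₀ ξ, |u v - ustar v| := by
  intro η hη
  have hE : E₁ = decayFactor a α₀ N L := funext fun w => funext (hE₁ w)
  have hIcc : Icc α₀ η ⊆ Icc α₀ ξ := Icc_subset_Icc_right hη.2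
  have hN : ∀ x, 0 ≤ N x ∧ N x ≤ NM := fun x => ⟨hNm.le.trans (hNb x).1, (hNb x).2⟩
  have hL : ∀ x, Lm ≤ L x := fun x => (hLb x).1
  rw [hχ₁, hχ₁, hE]
  exact abs_integral_decayFactor_div_sub_le hα hη.1 hLm (continuous_of_abs_sub_le_mul_abs hNlip)
    (fun x => (hN x).1) (continuous_of_abs_sub_le_mul_abs hLlip) hL
    (abs_div_sub_div_le_of_lipschitz hLm hL hN hNlip hLlip) hLlip (hu.mono hIcc)
    (hustar.mono hIcc) fun v hv => le_iSup_Icc_of_continuousOn (hu.sub hustar).abs (hIcc hv)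

theorem stmt8 (a α₀ ξ Nm NM Lm LM Nt Lt : ℝ) (u ustar N L : ℝ → ℝ)
    (ha : 0 < a) (hα : 0 < α₀) (hαξ : α₀ < ξ)
    (hNm : 0 < Nm) (hNM : Nm ≤ NM) (hLm : 0 < Lm) (hLM : Lm ≤ LM)
    (hNt : 0 ≤ Nt) (hLt : 0 ≤ Lt)
    (hNb : ∀ x, Nm ≤ N x ∧ N x ≤ NM) (hLb : ∀ x, Lm ≤ L x ∧ L x ≤ LM)
    (hNlip : ∀ x y, |N x - N y| ≤ Nt * |x - y|)
    (hLlip : ∀ x y, |L x - L y| ≤ Lt * |x - y|)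
    (hu : ContinuousOn u (Icc α₀ ξ)) (hustar : ContinuousOn ustar (Icc α₀ ξ))
    (E₁ χ₁ : (ℝ → ℝ) → ℝ → ℝ)
    (hE₁ : ∀ w η, E₁ w η = Real.exp (-2 * a ^ 2 * ∫ v in α₀..η, v * N (w v) / L (w v)))
    (hχ₁ : ∀ w η, χ₁ w η = ∫ v in α₀..η, E₁ w v / (v ^ 2 * L (w v))) :
    ∀ η ∈ Icc α₀ ξ,
      |χ₁ u η - χ₁ ustar η| ≤
        (a ^ 2 / Lm * (Nt / Lm + NM * Lt / Lm ^ 2) * (η + α₀ ^ 2 / η - 2 * α₀) +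
          Lt / Lm ^ 2 * (1 / α₀ - 1 / η)) *
          ⨆ v : Icc α₀ ξ, |u v - ustar v| :=
  stmt8_general a α₀ ξ Nm NM Lm LM Nt Lt u ustar N L hα hNm hLm hNb hLb hNlip hLlip hu hustar E₁ χ₁
    hE₁ hχ₁
end

section
/- The function $\mathcal{G}(x) = \sqrt{\pi}\, x\, e^{x^2}(1 - \mathrm{erf}(x))$ is strictly increasing on $(0, \infty)$ and satisfies $0 < \mathcal{G}(x) < 1$ for all $x > 0$, with $\mathcal{G}(x) \to 1$ as $x \to \infty$. -/
open Real Set Filter intervalIntegral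

noncomputable def G (x : ℝ) : ℝ :=
  Real.sqrt π * x * Real.exp (x ^ 2) * (1 - erf x)

/-!
Write `J x = ∫_x^∞ e^{-t²} dt`, so that `G x = 2 x e^{x²} J x`. The Mills-ratio bounds
`x e^{-x²} / (1 + 2x²) < J x < e^{-x²} / (2x)` hold because in each case the gap has negative
derivative and vanishes at infinity. The upper bound is `G x < 1`; the lower bound gives
`G x > 1 - 1 / (1 + 2x²)` and is also exactly the positivity of
`G' x = 2 (1 + 2x²) e^{x²} J x - 2x`, so `G` is strictly increasing with `G 0 = 0`.
-/

open MeasureTheory Topology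

theorem pos_of_hasDerivAt_neg_of_tendsto_zero {f f' : ℝ → ℝ} {a x : ℝ}
    (hf : ∀ y ∈ Ioi a, HasDerivAt f (f' y) y) (hf' : ∀ y ∈ Ioi a, f' y < 0)
    (hlim : Tendsto f atTop (𝓝 0)) (hx : a < x) : 0 < f x := by
  have hanti : StrictAntiOn f (Ioi a) :=
    strictAntiOn_of_hasDerivWithinAt_neg (convex_Ioi a)
      (fun y hy => (hf y hy).continuousAt.continuousWithinAt)
      (fun y hy => (hf y (interior_subset hy)).hasDerivWithinAt)
      (fun y hy => hf' y (interior_subset hy))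
  have hx1 : x + 1 ∈ Ioi a := mem_Ioi.mpr (by linarith)
  have hnonneg : 0 ≤ f (x + 1) := by
    refine le_of_tendsto hlim ?_
    filter_upwards [eventually_ge_atTop (x + 1)] with y hy
    exact hanti.antitoneOn hx1 (lt_of_lt_of_le hx1 hy) hy
  exact hnonneg.trans_lt (hanti hx hx1 (by linarith))

noncomputable def gaussTail (x : ℝ) : ℝ := ∫ t in Ioi x, exp (-t ^ 2)

theorem integrable_exp_neg_sq : Integrable fun t : ℝ => exp (-t ^ 2) := by
  simpa using integrable_exp_neg_mul_sq one_pos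

theorem gaussTail_zero : gaussTail 0 = √π / 2 := by
  simpa [gaussTail] using integral_gaussian_Ioi 1

theorem gaussTail_eq (x : ℝ) : gaussTail x = √π / 2 - ∫ t in (0:ℝ)..x, exp (-t ^ 2) := by
  rw [← gaussTail_zero, gaussTail, gaussTail, ← integral_Ioi_sub_Ioi'
    integrable_exp_neg_sq.integrableOn integrable_exp_neg_sq.integrableOn, sub_sub_cancel]

theorem hasDerivAt_gaussTail (x : ℝ) : HasDerivAt gaussTail (-exp (-x ^ 2)) x := by
  have hcont : Continuous fun t : ℝ => exp (-t ^ 2) := by fun_prop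
  have := (integral_hasDerivAt_right (hcont.intervalIntegrable 0 x)
    (hcont.stronglyMeasurableAtFilter _ _) hcont.continuousAt).const_sub (√π / 2)
  exact this.congr_of_eventuallyEq (Eventually.of_forall gaussTail_eq)

theorem tendsto_gaussTail_atTop : Tendsto gaussTail atTop (𝓝 0) := by
  have h := (intervalIntegral_tendsto_integral_Ioi 0 integrable_exp_neg_sq.integrableOn
    tendsto_id).const_sub (√π / 2)
  rw [← gaussTail, gaussTail_zero, sub_self] at h
  exact h.congr fun x => (gaussTail_eq x).symm

theorem hasDerivAt_exp_neg_sq (x : ℝ) :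
    HasDerivAt (fun t => exp (-t ^ 2)) (-2 * x * exp (-x ^ 2)) x := by
  have := ((hasDerivAt_pow 2 x).neg).exp
  simp only [Pi.neg_apply] at this
  convert this using 1
  ring

theorem tendsto_exp_neg_sq_atTop : Tendsto (fun x : ℝ => exp (-x ^ 2)) atTop (𝓝 0) :=
  tendsto_exp_atBot.comp (tendsto_neg_atTop_atBot.comp (tendsto_pow_atTop two_ne_zero))

theorem gaussTail_lt_exp_neg_sq_div {x : ℝ} (hx : 0 < x) :
    gaussTail x < exp (-x ^ 2) / (2 * x) := by
  suffices 0 < exp (-x ^ 2) / (2 * x) - gaussTail x by linarith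
  refine pos_of_hasDerivAt_neg_of_tendsto_zero
    (f := fun y => exp (-y ^ 2) / (2 * y) - gaussTail y)
    (f' := fun y => -(exp (-y ^ 2) / (2 * y ^ 2)))
    (fun y (hy : 0 < y) => ?_) (fun y (hy : 0 < y) => neg_lt_zero.mpr (by positivity)) ?_ hx
  · have := ((hasDerivAt_exp_neg_sq y).div ((hasDerivAt_id y).const_mul 2) (by positivity)).sub
      (hasDerivAt_gaussTail y)
    refine this.congr_deriv ?_
    simp only [id]
    field_simp
    ring
  · have hinv := tendsto_inv_atTop_zero.comp (tendsto_id.const_mul_atTop (two_pos : (0:ℝ) < 2))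
    simpa [div_eq_mul_inv, mul_comm] using
      (tendsto_exp_neg_sq_atTop.mul hinv).sub tendsto_gaussTail_atTop

theorem mul_exp_neg_sq_div_lt_gaussTail (x : ℝ) :
    x * exp (-x ^ 2) / (1 + 2 * x ^ 2) < gaussTail x := by
  suffices 0 < gaussTail x - x * exp (-x ^ 2) / (1 + 2 * x ^ 2) by linarith
  refine pos_of_hasDerivAt_neg_of_tendsto_zero (a := x - 1)
    (f := fun y => gaussTail y - y * exp (-y ^ 2) / (1 + 2 * y ^ 2))
    (f' := fun y => -(2 * exp (-y ^ 2) / (1 + 2 * y ^ 2) ^ 2))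
    (fun y _ => ?_) (fun y _ => neg_lt_zero.mpr (by positivity)) ?_ (by linarith)
  · have := (hasDerivAt_gaussTail y).sub (((hasDerivAt_id y).mul (hasDerivAt_exp_neg_sq y)).div
      (((hasDerivAt_pow 2 y).const_mul 2).const_add 1) (by positivity))
    refine this.congr_deriv ?_
    simp only [id, Pi.mul_apply]
    field_simp
    ring
  · have hvanish : Tendsto (fun y => y * exp (-y ^ 2) / (1 + 2 * y ^ 2)) atTop (𝓝 0) := by
      refine squeeze_zero' ?_ ?_ tendsto_exp_neg_sq_atTop
      · filter_upwards [eventually_ge_atTop 0] with y hy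
        positivity
      · filter_upwards [eventually_ge_atTop 0] with y hy
        rw [div_le_iff₀ (by positivity)]
        nlinarith [mul_nonneg (exp_pos (-y ^ 2)).le (by nlinarith : 0 ≤ 1 + 2 * y ^ 2 - y)]
    simpa using tendsto_gaussTail_atTop.sub hvanish

theorem G_eq_mul_gaussTail (x : ℝ) : G x = 2 * x * exp (x ^ 2) * gaussTail x := by
  have : 0 < √π := sqrt_pos.mpr pi_pos
  rw [G, erf, gaussTail_eq]
  field_simp

theorem hasDerivAt_G (x : ℝ) :
    HasDerivAt G (2 * (1 + 2 * x ^ 2) * exp (x ^ 2) * gaussTail x - 2 * x) x := by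
  have := (((hasDerivAt_id x).const_mul 2).mul ((hasDerivAt_pow 2 x).exp)).mul
    (hasDerivAt_gaussTail x)
  refine (this.congr_of_eventuallyEq (Eventually.of_forall G_eq_mul_gaussTail)).congr_deriv ?_
  simp only [id, Pi.mul_apply, exp_neg]
  field_simp
  ring

theorem G_lt_one {x : ℝ} (hx : 0 < x) : G x < 1 := by
  have h := mul_lt_mul_of_pos_left (gaussTail_lt_exp_neg_sq_div hx)
    (by positivity : 0 < 2 * x * exp (x ^ 2))
  rw [G_eq_mul_gaussTail]
  refine h.trans_eq ?_
  rw [exp_neg]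
  field_simp

theorem one_sub_inv_lt_G {x : ℝ} (hx : 0 < x) : 1 - (1 + 2 * x ^ 2)⁻¹ < G x := by
  have h := mul_lt_mul_of_pos_left (mul_exp_neg_sq_div_lt_gaussTail x)
    (by positivity : 0 < 2 * x * exp (x ^ 2))
  rw [G_eq_mul_gaussTail]
  refine h.trans_eq' ?_
  rw [exp_neg]
  field_simp
  ring

theorem strictMono_G : StrictMono G := by
  refine strictMono_of_hasDerivAt_pos hasDerivAt_G fun x => ?_
  have h := mul_lt_mul_of_pos_left (mul_exp_neg_sq_div_lt_gaussTail x)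
    (by positivity : 0 < 2 * (1 + 2 * x ^ 2) * exp (x ^ 2))
  rw [sub_pos]
  refine h.trans_eq' ?_
  rw [exp_neg]
  field_simp

theorem stmt14 :
    StrictMonoOn G (Ioi (0:ℝ)) ∧
    (∀ x : ℝ, 0 < x → 0 < G x ∧ G x < 1) ∧
    Tendsto G atTop (nhds 1) := by
  have hG0 : G 0 = 0 := by simp [G]
  refine ⟨strictMono_G.strictMonoOn _,
    fun x hx => ⟨hG0 ▸ strictMono_G hx, G_lt_one hx⟩, ?_⟩
  have hlower : Tendsto (fun x : ℝ => 1 - (1 + 2 * x ^ 2)⁻¹) atTop (𝓝 1) := by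
    have hden : Tendsto (fun x : ℝ => 1 + 2 * x ^ 2) atTop atTop :=
      tendsto_atTop_add_const_left _ 1
        ((tendsto_pow_atTop two_ne_zero).const_mul_atTop (two_pos : (0:ℝ) < 2))
    simpa using (tendsto_inv_atTop_zero.comp hden).const_sub 1
  refine tendsto_of_tendsto_of_tendsto_of_le_of_le' hlower tendsto_const_nhds ?_ ?_
  · filter_upwards [eventually_gt_atTop 0] with x hx using (one_sub_inv_lt_G hx).le
  · filter_upwards [eventually_gt_atTop 0] with x hx using (G_lt_one hx).le
end

section
/- For $c, \xi > 0$, $\int_{\xi}^{\infty} \frac{e^{-c^2(v^2 - \xi^2)}}{v^2} dv = \frac{1}{\xi} - c\sqrt{\pi}\, e^{c^2\xi^2}(1 - \mathrm{erf}(c\xi)) = \frac{1}{\xi}\left(1 - \mathcal{G}(c\xi)\right)$, where $\mathcal{G}(x) = \sqrt{\pi} x e^{x^2}(1 - \mathrm{erf}(x))$; in particular this integral is positive and at most $1/\xi$. -/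
open Real Set intervalIntegral MeasureTheory

/-!
With `g v = exp (-c ^ 2 * (v ^ 2 - ξ ^ 2))`, the function `-g v / v` is an antiderivative of
`g v / v ^ 2 + 2 c ^ 2 g v` that vanishes at infinity and equals `-1 / ξ` at `ξ`, so
`∫_ξ^∞ g / v ^ 2 = 1 / ξ - 2 c ^ 2 ∫_ξ^∞ g`. The remaining integral is a Gaussian tail:
`∫_ξ^∞ g = exp (c ^ 2 ξ ^ 2) (√π / (2 c)) (1 - erf (c ξ))`. Both summands being nonnegative
gives the upper bound `1 / ξ`.
-/

open Filter Topology

theorem integral_Ioi_exp_neg_sq (x : ℝ) :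
    ∫ t in Ioi x, exp (-t ^ 2) = √π / 2 * (1 - erf x) := by
  have hint : ∀ a : ℝ, IntegrableOn (fun t => exp (-t ^ 2)) (Ioi a) := fun a => by
    simpa using (integrable_exp_neg_mul_sq one_pos).integrableOn
  have hhalf : ∫ t in Ioi (0 : ℝ), exp (-t ^ 2) = √π / 2 := by
    simpa using integral_gaussian_Ioi 1
  have hsplit := integral_Ioi_sub_Ioi' (hint 0) (hint x)
  rw [erf, ← hsplit, hhalf]
  field_simp
  ring

theorem exp_neg_mul_sq_sub (c ξ v : ℝ) :
    exp (-c ^ 2 * (v ^ 2 - ξ ^ 2)) = exp (c ^ 2 * ξ ^ 2) * exp (-(c * v) ^ 2) := by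
  rw [← exp_add]
  ring_nf

theorem integrableOn_exp_neg_mul_sq_sub {c : ℝ} (hc : 0 < c) (ξ : ℝ) :
    IntegrableOn (fun v => exp (-c ^ 2 * (v ^ 2 - ξ ^ 2))) (Ioi ξ) := by
  simp_rw [exp_neg_mul_sq_sub, mul_pow, ← neg_mul]
  exact ((integrable_exp_neg_mul_sq (pow_pos hc 2)).const_mul _).integrableOn

theorem integral_Ioi_exp_neg_mul_sq_sub {c : ℝ} (hc : 0 < c) (ξ : ℝ) :
    ∫ v in Ioi ξ, exp (-c ^ 2 * (v ^ 2 - ξ ^ 2)) =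
      exp (c ^ 2 * ξ ^ 2) * (√π / (2 * c)) * (1 - erf (c * ξ)) := by
  simp_rw [exp_neg_mul_sq_sub, MeasureTheory.integral_const_mul,
    integral_comp_mul_left_Ioi (fun t => exp (-t ^ 2)) ξ hc, integral_Ioi_exp_neg_sq, smul_eq_mul]
  field_simp

theorem hasDerivAt_neg_exp_neg_mul_sq_sub_div (c ξ : ℝ) {x : ℝ} (hx : x ≠ 0) :
    HasDerivAt (fun v => -(exp (-c ^ 2 * (v ^ 2 - ξ ^ 2)) / v))
      (exp (-c ^ 2 * (x ^ 2 - ξ ^ 2)) / x ^ 2 + 2 * c ^ 2 * exp (-c ^ 2 * (x ^ 2 - ξ ^ 2))) x := by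
  have hexp : HasDerivAt (fun v => exp (-c ^ 2 * (v ^ 2 - ξ ^ 2)))
      (exp (-c ^ 2 * (x ^ 2 - ξ ^ 2)) * (-c ^ 2 * (2 * x))) x := by
    simpa using (((hasDerivAt_pow 2 x).sub_const (ξ ^ 2)).const_mul (-c ^ 2)).exp
  have hquot : HasDerivAt (fun v => -(exp (-c ^ 2 * (v ^ 2 - ξ ^ 2)) / v)) _ x :=
    (hexp.div (hasDerivAt_id' x) hx).neg
  convert hquot using 1
  field_simp
  ring

theorem tendsto_neg_exp_neg_mul_sq_sub_div_atTop (c ξ : ℝ) :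
    Tendsto (fun v => -(exp (-c ^ 2 * (v ^ 2 - ξ ^ 2)) / v)) atTop (𝓝 0) := by
  refine squeeze_zero_norm' (a := fun v => exp (c ^ 2 * ξ ^ 2) * v⁻¹) ?_ ?_
  · filter_upwards [eventually_gt_atTop (0 : ℝ)] with v hv
    rw [norm_neg, norm_div, norm_of_nonneg (exp_pos _).le, norm_of_nonneg hv.le, div_eq_mul_inv]
    exact mul_le_mul_of_nonneg_right (exp_le_exp.mpr (by nlinarith [sq_nonneg (c * v)]))
      (inv_nonneg.mpr hv.le)
  · simpa using tendsto_inv_atTop_zero.const_mul (exp (c ^ 2 * ξ ^ 2))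

section

variable {ξ : ℝ}

theorem integrableOn_Ioi_exp_div_sq_add (c : ℝ) (hξ : 0 < ξ) :
    IntegrableOn (fun v => exp (-c ^ 2 * (v ^ 2 - ξ ^ 2)) / v ^ 2
      + 2 * c ^ 2 * exp (-c ^ 2 * (v ^ 2 - ξ ^ 2))) (Ioi ξ) :=
  integrableOn_Ioi_deriv_of_nonneg'
    (fun x hx => hasDerivAt_neg_exp_neg_mul_sq_sub_div c ξ (hξ.trans_le hx).ne')
    (fun x _ => by positivity) (tendsto_neg_exp_neg_mul_sq_sub_div_atTop c ξ)

theorem integral_Ioi_exp_div_sq_add (c : ℝ) (hξ : 0 < ξ) :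
    ∫ v in Ioi ξ, (exp (-c ^ 2 * (v ^ 2 - ξ ^ 2)) / v ^ 2
      + 2 * c ^ 2 * exp (-c ^ 2 * (v ^ 2 - ξ ^ 2))) = 1 / ξ := by
  rw [integral_Ioi_of_hasDerivAt_of_nonneg'
    (fun x hx => hasDerivAt_neg_exp_neg_mul_sq_sub_div c ξ (hξ.trans_le hx).ne')
    (fun x _ => by positivity) (tendsto_neg_exp_neg_mul_sq_sub_div_atTop c ξ)]
  simp

theorem integrableOn_Ioi_exp_div_sq (c : ℝ) (hξ : 0 < ξ) :
    IntegrableOn (fun v => exp (-c ^ 2 * (v ^ 2 - ξ ^ 2)) / v ^ 2) (Ioi ξ) := by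
  refine (integrableOn_Ioi_exp_div_sq_add c hξ).mono'
    (by fun_prop : Measurable _).aestronglyMeasurable ?_
  filter_upwards with v
  rw [norm_of_nonneg (by positivity)]
  exact le_add_of_nonneg_right (by positivity)

theorem integral_Ioi_exp_div_sq {c : ℝ} (hc : 0 < c) (hξ : 0 < ξ) :
    ∫ v in Ioi ξ, exp (-c ^ 2 * (v ^ 2 - ξ ^ 2)) / v ^ 2 =
      1 / ξ - c * √π * exp (c ^ 2 * ξ ^ 2) * (1 - erf (c * ξ)) := by
  have hsum := integral_Ioi_exp_div_sq_add c hξ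
  rw [integral_add (integrableOn_Ioi_exp_div_sq c hξ)
    ((integrableOn_exp_neg_mul_sq_sub hc ξ).const_mul _), MeasureTheory.integral_const_mul,
    integral_Ioi_exp_neg_mul_sq_sub hc] at hsum
  rw [← hsum]
  field_simp
  ring

theorem integral_Ioi_exp_div_sq_pos (c : ℝ) (hξ : 0 < ξ) :
    0 < ∫ v in Ioi ξ, exp (-c ^ 2 * (v ^ 2 - ξ ^ 2)) / v ^ 2 := by
  have hpos : ∀ v ∈ Ioi ξ, 0 < exp (-c ^ 2 * (v ^ 2 - ξ ^ 2)) / v ^ 2 :=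
    fun v hv => div_pos (exp_pos _) (pow_pos (hξ.trans hv) 2)
  have hsupp : Ioi ξ ⊆ Function.support fun v => exp (-c ^ 2 * (v ^ 2 - ξ ^ 2)) / v ^ 2 :=
    fun v hv => (hpos v hv).ne'
  rw [setIntegral_pos_iff_support_of_nonneg_ae
    ((ae_restrict_iff' measurableSet_Ioi).2 (ae_of_all _ fun v hv => (hpos v hv).le))
    (integrableOn_Ioi_exp_div_sq c hξ),
    inter_eq_self_of_subset_right hsupp, volume_Ioi]
  exact ENNReal.zero_lt_top

theorem integral_Ioi_exp_div_sq_le (c : ℝ) (hξ : 0 < ξ) :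
    ∫ v in Ioi ξ, exp (-c ^ 2 * (v ^ 2 - ξ ^ 2)) / v ^ 2 ≤ 1 / ξ := by
  rw [← integral_Ioi_exp_div_sq_add c hξ]
  refine setIntegral_mono (integrableOn_Ioi_exp_div_sq c hξ)
    (integrableOn_Ioi_exp_div_sq_add c hξ) fun v => ?_
  exact le_add_of_nonneg_right (by positivity)

end

theorem stmt16 (c ξ : ℝ) (hc : 0 < c) (hξ : 0 < ξ) :
    (∫ v in Ioi ξ, Real.exp (-c ^ 2 * (v ^ 2 - ξ ^ 2)) / v ^ 2) =
      1 / ξ - c * Real.sqrt π * Real.exp (c ^ 2 * ξ ^ 2) * (1 - erf (c * ξ)) ∧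
    (∫ v in Ioi ξ, Real.exp (-c ^ 2 * (v ^ 2 - ξ ^ 2)) / v ^ 2) =
      (1 / ξ) * (1 - G (c * ξ)) ∧
    0 < (∫ v in Ioi ξ, Real.exp (-c ^ 2 * (v ^ 2 - ξ ^ 2)) / v ^ 2) ∧
    (∫ v in Ioi ξ, Real.exp (-c ^ 2 * (v ^ 2 - ξ ^ 2)) / v ^ 2) ≤ 1 / ξ := by
  have hval := integral_Ioi_exp_div_sq hc hξ
  refine ⟨hval, ?_, integral_Ioi_exp_div_sq_pos c hξ, integral_Ioi_exp_div_sq_le c hξ⟩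
  rw [hval, G, mul_pow]
  field_simp
end
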